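/- Let d ≥ 1, n ≥ 1, and let X_{Q,S}, X_{P,S} : ℝ^d × ℝ^d → ℝ^{d×n} be continuously differentiable maps satisfying: for all (q,p), all i,k ∈ {1,…,d} and all j ∈ {1,…,n}, ∂(X_{Q,S})_{ij}/∂q_k + ∂(X_{P,S})_{kj}/∂p_i = 0, ∂(X_{Q,S})_{ij}/∂p_k = ∂(X_{Q,S})_{kj}/∂p_i, and ∂(X_{P,S})_{ij}/∂q_k = ∂(X_{P,S})_{kj}/∂q_i. Define H_S : ℝ^d × ℝ^d → ℝ^n componentwise by (H_S)_j(q,p) = ∫₀¹ ( Σ_i p_i (X_{Q,S})_{ij}(λq, λp) − Σ_i q_i (X_{P,S})_{ij}(λq, λp) ) dλ. Then for all (q,p), all i ∈ {1,…,d} and all j ∈ {1,…,n}: ∂(H_S)_j/∂q_i (q,p) = −(X_{P,S})_{ij}(q,p) and ∂(H_S)_j/∂p_i (q,p) = (X_{Q,S})_{ij}(q,p). -/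

import Mathlib

noncomputable section

/-- Partial derivative of a scalar function on `ℝ^d × ℝ^d` with respect to `q_k`. -/
def pdq (d : ℕ) (f : ((Fin d → ℝ) × (Fin d → ℝ)) → ℝ) (k : Fin d)
    (z : (Fin d → ℝ) × (Fin d → ℝ)) : ℝ :=
  fderiv ℝ f z ((Pi.single k 1 : Fin d → ℝ), 0)

/-- Partial derivative of a scalar function on `ℝ^d × ℝ^d` with respect to `p_k`. -/
def pdp (d : ℕ) (f : ((Fin d → ℝ) × (Fin d → ℝ)) → ℝ) (k : Fin d)
    (z : (Fin d → ℝ) × (Fin d → ℝ)) : ℝ :=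
  fderiv ℝ f z (0, (Pi.single k 1 : Fin d → ℝ))

/-- The stochastic integrability conditions for the purely stochastic part, for
matrix-valued maps `X_{Q,S}, X_{P,S} : ℝ^d × ℝ^d → ℝ^{d×n}`. -/
def StochIntegrability (d n : ℕ)
    (XQS XPS : ((Fin d → ℝ) × (Fin d → ℝ)) → Fin d → Fin n → ℝ) : Prop :=
  ∀ z : (Fin d → ℝ) × (Fin d → ℝ), ∀ i k : Fin d, ∀ j : Fin n,
    pdq d (fun w => XQS w i j) k z + pdp d (fun w => XPS w k j) i z = 0 ∧
    pdp d (fun w => XQS w i j) k z = pdp d (fun w => XQS w k j) i z ∧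
    pdq d (fun w => XPS w i j) k z = pdq d (fun w => XPS w k j) i z

/-!
The integrand of `(H_S)_j` is `ω (λ • z) z` for the 1-form
`ω = ∑ᵢ (X_{Q,S})_{ij} dpᵢ - ∑ᵢ (X_{P,S})_{ij} dqᵢ`, so `(H_S)_j` is the integral of `ω` along the
segment from `0` to `z`. The three integrability conditions say exactly that the derivative of
`ω` is symmetric, i.e. that `ω` is closed, and by the Poincaré lemma on the convex space
`ℝ^d × ℝ^d` this radial integral is a primitive of `ω`. Reading off the `dqᵢ` and `dpᵢ`
components of `ω` gives the two formulas.
-/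

open Set Finset ContinuousLinearMap

section Poincare

variable {E F : Type*} [NormedAddCommGroup E] [NormedSpace ℝ E] [NormedAddCommGroup F]
  [NormedSpace ℝ F] [CompleteSpace F]

theorem hasFDerivAt_radial_integral_of_fderiv_symmetric {ω : E → E →L[ℝ] F}
    (hω : Differentiable ℝ ω) (hdω : ∀ a x y, fderiv ℝ ω a x y = fderiv ℝ ω a y x) (z : E) :
    HasFDerivAt (fun b ↦ ∫ t in (0 : ℝ)..1, ω (t • b) b) (ω z) z := by
  have h := convex_univ.hasFDerivWithinAt_curveIntegral_segment_of_hasFDerivWithinAt_symmetric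
    (a := 0) (fun x _ ↦ (hω x).hasFDerivAt.hasFDerivWithinAt) (fun a _ x _ y _ ↦ hdω a x y)
    (mem_univ _) (mem_univ z)
  rw [hasFDerivWithinAt_univ] at h
  convert h using 2 with b
  simp [curveIntegral_segment, AffineMap.lineMap_apply_module]

end Poincare

section StochasticForm

variable {d n : ℕ}

theorem fderiv_apply_eq_sum_pdq_add_sum_pdp (g : (Fin d → ℝ) × (Fin d → ℝ) → ℝ)
    (w v : (Fin d → ℝ) × (Fin d → ℝ)) :
    fderiv ℝ g w v = ∑ k, v.1 k * pdq d g k w + ∑ k, v.2 k * pdp d g k w := by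
  have hv : v = ∑ k, v.1 k • ((Pi.single k 1 : Fin d → ℝ), (0 : Fin d → ℝ))
      + ∑ k, v.2 k • ((0 : Fin d → ℝ), (Pi.single k 1 : Fin d → ℝ)) := by
    ext <;> simp [Prod.fst_sum, Prod.snd_sum, Finset.sum_apply, Pi.single_apply]
  conv_lhs => rw [hv]
  simp only [map_add, map_sum, map_smul, smul_eq_mul, pdq, pdp]

def stochasticForm (XQS XPS : ((Fin d → ℝ) × (Fin d → ℝ)) → Fin d → Fin n → ℝ) (j : Fin n)
    (w : (Fin d → ℝ) × (Fin d → ℝ)) : (Fin d → ℝ) × (Fin d → ℝ) →L[ℝ] ℝ :=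
  ∑ m, XQS w m j • (proj m).comp (snd ℝ (Fin d → ℝ) (Fin d → ℝ))
    - ∑ m, XPS w m j • (proj m).comp (fst ℝ (Fin d → ℝ) (Fin d → ℝ))

variable {XQS XPS : ((Fin d → ℝ) × (Fin d → ℝ)) → Fin d → Fin n → ℝ} {j : Fin n}

@[simp]
theorem stochasticForm_apply (w v : (Fin d → ℝ) × (Fin d → ℝ)) :
    stochasticForm XQS XPS j w v = ∑ m, v.2 m * XQS w m j - ∑ m, v.1 m * XPS w m j := by
  simp [stochasticForm, mul_comm]

theorem hasFDerivAt_stochasticForm (hQ : Differentiable ℝ XQS) (hP : Differentiable ℝ XPS)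
    (a : (Fin d → ℝ) × (Fin d → ℝ)) :
    HasFDerivAt (stochasticForm XQS XPS j)
      (∑ m, (fderiv ℝ (fun w ↦ XQS w m j) a).smulRight ((proj m).comp (snd ℝ _ _))
        - ∑ m, (fderiv ℝ (fun w ↦ XPS w m j) a).smulRight ((proj m).comp (fst ℝ _ _))) a := by
  refine (HasFDerivAt.fun_sum fun m _ ↦ ?_).sub (HasFDerivAt.fun_sum fun m _ ↦ ?_)
  · exact ((differentiable_pi.1 (differentiable_pi.1 hQ m) j) a).hasFDerivAt.smul_const
      (f := ((proj m).comp (snd ℝ _ _) : (Fin d → ℝ) × (Fin d → ℝ) →L[ℝ] ℝ))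
  · exact ((differentiable_pi.1 (differentiable_pi.1 hP m) j) a).hasFDerivAt.smul_const
      (f := ((proj m).comp (fst ℝ _ _) : (Fin d → ℝ) × (Fin d → ℝ) →L[ℝ] ℝ))

theorem differentiable_stochasticForm (hQ : Differentiable ℝ XQS) (hP : Differentiable ℝ XPS) :
    Differentiable ℝ (stochasticForm XQS XPS j) :=
  fun a ↦ (hasFDerivAt_stochasticForm hQ hP a).differentiableAt

theorem fderiv_stochasticForm_apply (hQ : Differentiable ℝ XQS) (hP : Differentiable ℝ XPS)
    (a x y : (Fin d → ℝ) × (Fin d → ℝ)) :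
    fderiv ℝ (stochasticForm XQS XPS j) a x y =
      ∑ m, y.2 m * fderiv ℝ (fun w ↦ XQS w m j) a x
        - ∑ m, y.1 m * fderiv ℝ (fun w ↦ XPS w m j) a x := by
  simp [(hasFDerivAt_stochasticForm hQ hP a).fderiv, mul_comm]

theorem StochIntegrability.fderiv_stochasticForm_symm (hint : StochIntegrability d n XQS XPS)
    (hQ : Differentiable ℝ XQS) (hP : Differentiable ℝ XPS) (a x y : (Fin d → ℝ) × (Fin d → ℝ)) :
    fderiv ℝ (stochasticForm XQS XPS j) a x y = fderiv ℝ (stochasticForm XQS XPS j) a y x := by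
  set f : (Fin d → ℝ) × (Fin d → ℝ) → (Fin d → ℝ) × (Fin d → ℝ) → Fin d → Fin d → ℝ :=
    fun x y m k ↦ x.1 k * y.2 m * pdq d (fun w ↦ XQS w m j) k a
      + x.2 k * y.2 m * pdp d (fun w ↦ XQS w m j) k a
      - x.1 k * y.1 m * pdq d (fun w ↦ XPS w m j) k a
      - x.2 k * y.1 m * pdp d (fun w ↦ XPS w m j) k a
  have expand : ∀ x y, fderiv ℝ (stochasticForm XQS XPS j) a x y = ∑ m, ∑ k, f x y m k := by
    intro x y
    simp only [fderiv_stochasticForm_apply hQ hP, fderiv_apply_eq_sum_pdq_add_sum_pdp,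
      ← sum_sub_distrib, mul_add, mul_sum, ← sum_add_distrib, f]
    refine sum_congr rfl fun m _ ↦ sum_congr rfl fun k _ ↦ by ring
  have swap : ∀ m k, f x y m k = f y x k m := by
    intro m k
    obtain ⟨hQq, hQp, hPq⟩ := hint a m k j
    linear_combination x.1 k * y.2 m * hQq + x.2 k * y.2 m * hQp - x.1 k * y.1 m * hPq
      - x.2 k * y.1 m * (hint a k m j).1
  rw [expand, expand, sum_comm]
  simp only [swap]

end StochasticForm

theorem stmt5_general (d n : ℕ)
    (XQS XPS : ((Fin d → ℝ) × (Fin d → ℝ)) → Fin d → Fin n → ℝ)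
    (hXQS : ContDiff ℝ 1 XQS) (hXPS : ContDiff ℝ 1 XPS)
    (hint : StochIntegrability d n XQS XPS)
    (HS : ((Fin d → ℝ) × (Fin d → ℝ)) → Fin n → ℝ)
    (hHS : ∀ (z : (Fin d → ℝ) × (Fin d → ℝ)) (j : Fin n),
      HS z j = ∫ l in (0:ℝ)..1,
        ((∑ i, z.2 i * XQS (l • z.1, l • z.2) i j) -
          ∑ i, z.1 i * XPS (l • z.1, l • z.2) i j)) :
    ∀ (z : (Fin d → ℝ) × (Fin d → ℝ)) (i : Fin d) (j : Fin n),
      pdq d (fun w => HS w j) i z = - XPS z i j ∧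
      pdp d (fun w => HS w j) i z = XQS z i j := by
  intro z i j
  have hQ := hXQS.differentiable one_ne_zero
  have hP := hXPS.differentiable one_ne_zero
  have hH : HasFDerivAt (fun w ↦ HS w j) (stochasticForm XQS XPS j z) z := by
    have hHS_eq :
        (fun w ↦ HS w j) = fun w ↦ ∫ t in (0 : ℝ)..1, stochasticForm XQS XPS j (t • w) w :=
      funext fun w ↦ by simp only [hHS, stochasticForm_apply]; rfl
    rw [hHS_eq]
    exact hasFDerivAt_radial_integral_of_fderiv_symmetric
      (differentiable_stochasticForm hQ hP) (hint.fderiv_stochasticForm_symm hQ hP) z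
  simp [pdq, pdp, hH.fderiv, Pi.single_apply]

/-- under the stochastic integrability conditions, the stochastic
Hamiltonian `(H_S)_j(q,p) = ∫₀¹ (Σ_i p_i (X_{Q,S})_{ij}(λq,λp) − Σ_i q_i
(X_{P,S})_{ij}(λq,λp)) dλ` satisfies `∂(H_S)_j/∂q_i = −(X_{P,S})_{ij}` and
`∂(H_S)_j/∂p_i = (X_{Q,S})_{ij}`. -/
theorem stmt5 (d n : ℕ) (hd : 1 ≤ d) (hn : 1 ≤ n)
    (XQS XPS : ((Fin d → ℝ) × (Fin d → ℝ)) → Fin d → Fin n → ℝ)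
    (hXQS : ContDiff ℝ 1 XQS) (hXPS : ContDiff ℝ 1 XPS)
    (hint : StochIntegrability d n XQS XPS)
    (HS : ((Fin d → ℝ) × (Fin d → ℝ)) → Fin n → ℝ)
    (hHS : ∀ (z : (Fin d → ℝ) × (Fin d → ℝ)) (j : Fin n),
      HS z j = ∫ l in (0:ℝ)..1,
        ((∑ i, z.2 i * XQS (l • z.1, l • z.2) i j) -
          ∑ i, z.1 i * XPS (l • z.1, l • z.2) i j)) :
    ∀ (z : (Fin d → ℝ) × (Fin d → ℝ)) (i : Fin d) (j : Fin n),
      pdq d (fun w => HS w j) i z = - XPS z i j ∧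
      pdp d (fun w => HS w j) i z = XQS z i j :=
  stmt5_general d n XQS XPS hXQS hXPS hint HS hHS
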